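/- Closure under conditioning implies the rectangularity membership condition: suppose P⁺ is closed under conditioning, i.e., for every (Pr,α) ∈ P⁺ and every event G ⊆ S with Pr(G) > 0, also (Pr|G, α) ∈ P⁺, and suppose C(P⁺|ᵖF) is convex for every event F ⊆ S. Then condition (a) of p-rectangularity holds: for all events E, F ⊆ S and all (Pr₁,α₁), (Pr₂,α₂), (Pr₃,α₃) ∈ P⁺ with Pr₁(E∩F) > 0 and Pr₂(Eᶜ∩F) > 0, the vector α₃·Pr₃(E∩F)·α₁·(Pr₁|(E∩F)) + α₃·Pr₃(Eᶜ∩F)·α₂·(Pr₂|(Eᶜ∩F)) lies in the closure of C(P⁺|ᵖF). -/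

import Mathlib

open scoped BigOperators

noncomputable section

variable {S : Type*}

/-- `Pr : S → ℝ` is a probability measure on the finite state space `S`. -/
def IsProb [Fintype S] (Pr : S → ℝ) : Prop :=
  (∀ s, 0 ≤ Pr s) ∧ (∑ s, Pr s) = 1

/-- A set of weighted probability measures: each element is a pair `(Pr, α)` with `Pr`
a probability measure and `α ∈ [0,1]`, with at most one weight per measure. -/
def IsWeightedSet [Fintype S] (W : Set ((S → ℝ) × ℝ)) : Prop :=
  (∀ w ∈ W, IsProb w.1 ∧ w.2 ∈ Set.Icc (0 : ℝ) 1) ∧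
    ∀ w ∈ W, ∀ w' ∈ W, w.1 = w'.1 → w.2 = w'.2

/-- The regret of act `f` at state `s` with respect to menu `M`:
`(max_{g ∈ M} g s) - f s`. -/
def regretAt (M : Finset (S → ℝ)) (f : S → ℝ) (s : S) : ℝ :=
  sSup ((fun g => g s) '' (M : Set (S → ℝ))) - f s

/-- The maximum weighted expected regret of `f` with respect to menu `M` and the
weighted set `W` of probability measures (it is `0` when `W = ∅`, since `sSup ∅ = 0`
for real numbers). -/
def wregret [Fintype S] (W : Set ((S → ℝ) × ℝ)) (M : Finset (S → ℝ)) (f : S → ℝ) : ℝ :=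
  sSup {x | ∃ w ∈ W, x = w.2 * ∑ s, w.1 s * regretAt M f s}

/-- `C(P⁺)`: the set of subprobability vectors dominated by some weighted measure in `W`. -/
def Cset (W : Set ((S → ℝ) × ℝ)) : Set (S → ℝ) :=
  {p | (∀ s, 0 ≤ p s) ∧ ∃ w ∈ W, ∀ s, p s ≤ w.2 * w.1 s}

/-- The probability of the event `E` under `Pr`. -/
def probOf (Pr : S → ℝ) (E : Finset S) : ℝ := ∑ s ∈ E, Pr s

/-- The conditional probability measure `Pr(· | E)`. -/
def condProb [DecidableEq S] (Pr : S → ℝ) (E : Finset S) : S → ℝ :=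
  fun s => if s ∈ E then Pr s / probOf Pr E else 0

/-- Prior-by-prior updating: `P⁺|ᵖE = {(Pr|E, α) : (Pr,α) ∈ P⁺, Pr(E) > 0}`. -/
def updP [DecidableEq S] (W : Set ((S → ℝ) × ℝ)) (E : Finset S) : Set ((S → ℝ) × ℝ) :=
  {w' | ∃ w ∈ W, 0 < probOf w.1 E ∧ w' = (condProb w.1 E, w.2)}

/-- `ūP(E) = sup {α·Pr(E) : (Pr,α) ∈ P⁺}`. -/
def ubar (W : Set ((S → ℝ) × ℝ)) (E : Finset S) : ℝ :=
  sSup {x | ∃ w ∈ W, x = w.2 * probOf w.1 E}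

/-- The likelihood-updated weight `αˡ_E` of the measure `Pr|E`:
`sup {α′·Pr′(E)/ūP(E) : (Pr′,α′) ∈ P⁺, Pr′|E = Pr|E}`. -/
def alphaL [DecidableEq S] (W : Set ((S → ℝ) × ℝ)) (E : Finset S) (Pr : S → ℝ) : ℝ :=
  sSup {x | ∃ w ∈ W, condProb w.1 E = condProb Pr E ∧ x = w.2 * probOf w.1 E / ubar W E}

/-- Likelihood updating: `P⁺|ˡE = {(Pr|E, αˡ_E) : (Pr,α) ∈ P⁺, Pr(E) > 0}`. -/
def updL [DecidableEq S] (W : Set ((S → ℝ) × ℝ)) (E : Finset S) : Set ((S → ℝ) × ℝ) :=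
  {w' | ∃ w ∈ W, 0 < probOf w.1 E ∧ w' = (condProb w.1 E, alphaL W E w.1)} 

/-- The MWER choice set: those `f ∈ M'` minimizing `wregret W M` over `M'`; regret is
computed with respect to the reference menu `M` and beliefs `W`. -/
def choiceSet [Fintype S] (M : Finset (S → ℝ)) (W : Set ((S → ℝ) × ℝ))
    (M' : Finset (S → ℝ)) : Set (S → ℝ) :=
  {f | f ∈ M' ∧ ∀ g ∈ M', wregret W M f ≤ wregret W M g}

/-- The maximum weighted expected value `Ē_{W}(θ) = sup_{(Pr,α) ∈ W} α·Σ_s Pr(s)·θ(s)`. -/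
def Ebar [Fintype S] (W : Set ((S → ℝ) × ℝ)) (θ : S → ℝ) : ℝ :=
  sSup {x | ∃ w ∈ W, x = w.2 * ∑ s, w.1 s * θ s}

/-- Axiom DC-M for the weighted set `W` under the updating rule `upd`. -/
def DCM [Fintype S] [DecidableEq S]
    (upd : Set ((S → ℝ) × ℝ) → Finset S → Set ((S → ℝ) × ℝ))
    (W : Set ((S → ℝ) × ℝ)) : Prop :=
  ∀ (E F : Finset S) (M M' : Finset (S → ℝ)), M.Nonempty → M' ⊆ M →
    ∀ f ∈ M', ∀ g ∈ M',
      f ∈ choiceSet M (upd W (E ∩ F)) M' → f ∈ choiceSet M (upd W (Eᶜ ∩ F)) M' →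
        f ∈ choiceSet M (upd W F) M' ∧
          (g ∉ choiceSet M (upd W (E ∩ F)) M' → g ∉ choiceSet M (upd W F) M')

/-- Separability (SEP) of the weighted regret of `f` with respect to menu `M` and the
weighted set `W`, under the updating rule `upd`. -/
def Separable [Fintype S] [DecidableEq S]
    (upd : Set ((S → ℝ) × ℝ) → Finset S → Set ((S → ℝ) × ℝ))
    (W : Set ((S → ℝ) × ℝ)) (M : Finset (S → ℝ)) (f : S → ℝ) : Prop :=
  ∀ E F : Finset S, 0 < ubar W (E ∩ F) → 0 < ubar W (Eᶜ ∩ F) →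
    (wregret (upd W F) M f =
      sSup {x | ∃ w ∈ upd W F, x =
        w.2 * (probOf w.1 (E ∩ F) * wregret (upd W (E ∩ F)) M f +
          probOf w.1 (Eᶜ ∩ F) * wregret (upd W (Eᶜ ∩ F)) M f)}) ∧
    (wregret (upd W (E ∩ F)) M f ≠ 0 →
      sSup {x | ∃ w ∈ upd W F, x =
        w.2 * probOf w.1 (Eᶜ ∩ F) * wregret (upd W (Eᶜ ∩ F)) M f} <
        wregret (upd W F) M f)

/-- `p`-rectangularity of the weighted set `W` (prior-by-prior updating; the updated
weights equal the original weights). -/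
def pRectangular [Fintype S] [DecidableEq S] (W : Set ((S → ℝ) × ℝ)) : Prop :=
  ∀ E F : Finset S,
    (∀ w₁ ∈ W, ∀ w₂ ∈ W, ∀ w₃ ∈ W,
      0 < probOf w₁.1 (E ∩ F) → 0 < probOf w₂.1 (Eᶜ ∩ F) →
      (fun s => w₃.2 * probOf w₃.1 (E ∩ F) * (w₁.2 * condProb w₁.1 (E ∩ F) s) +
          w₃.2 * probOf w₃.1 (Eᶜ ∩ F) * (w₂.2 * condProb w₂.1 (Eᶜ ∩ F) s)) ∈
        closure (Cset (updP W F))) ∧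
    (∀ δ : ℝ, 0 < δ → 0 < ubar W F →
      ∃ w ∈ updP W F,
        sSup {x | ∃ w' ∈ W, x = w'.2 * probOf w'.1 (Eᶜ ∩ F)} <
          w.2 * (δ * probOf w.1 (E ∩ F) + probOf w.1 (Eᶜ ∩ F))) ∧
    (∀ θ : S → ℝ, (∀ s, 0 ≤ θ s) →
      Ebar (updP W F) θ ≤
        sSup {x | ∃ w ∈ updP W F, x =
          w.2 * (probOf w.1 (E ∩ F) * Ebar (updP W (E ∩ F)) θ +
            probOf w.1 (Eᶜ ∩ F) * Ebar (updP W (Eᶜ ∩ F)) θ)})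

/-- `l`-rectangularity of the weighted set `W` (likelihood updating; the updated
weights are the likelihood-updated weights `αˡ`). -/
def lRectangular [Fintype S] [DecidableEq S] (W : Set ((S → ℝ) × ℝ)) : Prop :=
  ∀ E F : Finset S,
    (∀ w₁ ∈ W, ∀ w₂ ∈ W, ∀ w₃ ∈ W,
      0 < probOf w₁.1 (E ∩ F) → 0 < probOf w₂.1 (Eᶜ ∩ F) →
      (fun s => w₃.2 * probOf w₃.1 (E ∩ F) * (alphaL W (E ∩ F) w₁.1 * condProb w₁.1 (E ∩ F) s) +
          w₃.2 * probOf w₃.1 (Eᶜ ∩ F) * (alphaL W (Eᶜ ∩ F) w₂.1 * condProb w₂.1 (Eᶜ ∩ F) s)) ∈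
        closure (Cset (updL W F))) ∧
    (∀ δ : ℝ, 0 < δ → 0 < ubar W F →
      ∃ w ∈ updL W F,
        sSup {x | ∃ w' ∈ W, x = w'.2 * probOf w'.1 (Eᶜ ∩ F)} <
          w.2 * (δ * probOf w.1 (E ∩ F) + probOf w.1 (Eᶜ ∩ F))) ∧
    (∀ θ : S → ℝ, (∀ s, 0 ≤ θ s) →
      Ebar (updL W F) θ ≤
        sSup {x | ∃ w ∈ updL W F, x =
          w.2 * (probOf w.1 (E ∩ F) * Ebar (updL W (E ∩ F)) θ +
            probOf w.1 (Eᶜ ∩ F) * Ebar (updL W (Eᶜ ∩ F)) θ)})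

/-!
Closure under conditioning puts `(Pr₁|(E∩F), α₁)` and `(Pr₂|(Eᶜ∩F), α₂)` into `P⁺|ᵖF`, since
conditioning them further on `F` changes nothing. The target vector is then a combination of
their scaled densities with coefficients `α₃Pr₃(E∩F)` and `α₃Pr₃(Eᶜ∩F)`, whose sum `α₃Pr₃(F)` is
at most `1`; a convex set containing `0` absorbs such sub-convex combinations, so the vector lies
in `C(P⁺|ᵖF)` itself.
-/

def ClosedUnderConditioning [DecidableEq S] (W : Set ((S → ℝ) × ℝ)) : Prop :=
  ∀ w ∈ W, ∀ G : Finset S, 0 < probOf w.1 G → (condProb w.1 G, w.2) ∈ W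

theorem Convex.add_smul_mem_of_zero_mem {𝕜 E : Type*} [Field 𝕜] [LinearOrder 𝕜]
    [IsStrictOrderedRing 𝕜] [AddCommGroup E] [Module 𝕜 E] {s : Set E} (hs : Convex 𝕜 s)
    (h0 : 0 ∈ s) {x y : E} (hx : x ∈ s) (hy : y ∈ s) {a b : 𝕜}
    (ha : 0 ≤ a) (hb : 0 ≤ b) (hab : a + b ≤ 1) : a • x + b • y ∈ s := by
  rcases (add_nonneg ha hb).eq_or_lt with h | h
  · obtain ⟨rfl, rfl⟩ := (add_eq_zero_iff_of_nonneg ha hb).mp h.symm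
    simpa using h0
  · have hxy : (a / (a + b)) • x + (b / (a + b)) • y ∈ s :=
      hs hx hy (div_nonneg ha h.le) (div_nonneg hb h.le) (by field_simp)
    convert (hs.starConvex h0).smul_mem hxy h.le hab using 1
    rw [smul_add, smul_smul, smul_smul, mul_div_cancel₀ _ h.ne', mul_div_cancel₀ _ h.ne']

lemma probOf_nonneg {Pr : S → ℝ} (h : ∀ s, 0 ≤ Pr s) (E : Finset S) : 0 ≤ probOf Pr E :=
  Finset.sum_nonneg fun s _ => h s

lemma probOf_le_one [Fintype S] {Pr : S → ℝ} (h : IsProb Pr) (E : Finset S) :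
    probOf Pr E ≤ 1 :=
  h.2 ▸ Finset.sum_le_sum_of_subset_of_nonneg (Finset.subset_univ E) fun s _ _ => h.1 s

lemma probOf_inter_add_probOf_compl_inter [Fintype S] [DecidableEq S] (Pr : S → ℝ)
    (E F : Finset S) : probOf Pr (E ∩ F) + probOf Pr (Eᶜ ∩ F) = probOf Pr F := by
  rw [Finset.inter_comm E, Finset.inter_comm Eᶜ, ← Finset.sdiff_eq_inter_compl]
  exact Finset.sum_inter_add_sum_sdiff F E Pr

lemma condProb_nonneg [DecidableEq S] {Pr : S → ℝ} (h : ∀ s, 0 ≤ Pr s) (G : Finset S)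
    (s : S) : 0 ≤ condProb Pr G s := by
  unfold condProb
  split_ifs
  exacts [div_nonneg (h s) (probOf_nonneg h G), le_rfl]

lemma probOf_condProb_of_subset [DecidableEq S] {Pr : S → ℝ} {G F : Finset S} (hGF : G ⊆ F)
    (hG : 0 < probOf Pr G) : probOf (condProb Pr G) F = 1 := by
  unfold probOf condProb
  rw [Finset.sum_ite_mem, Finset.inter_eq_right.mpr hGF, ← Finset.sum_div]
  exact div_self hG.ne'

lemma condProb_condProb_of_subset [DecidableEq S] {Pr : S → ℝ} {G F : Finset S}
    (hGF : G ⊆ F) (hG : 0 < probOf Pr G) : condProb (condProb Pr G) F = condProb Pr G := by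
  funext s
  by_cases hs : s ∈ F
  · simp [condProb, hs, probOf_condProb_of_subset hGF hG]
  · simp [condProb, hs, show s ∉ G from fun h => hs (hGF h)]

lemma weighted_mem_Cset {W : Set ((S → ℝ) × ℝ)} {w : (S → ℝ) × ℝ} (hw : w ∈ W)
    (hα : 0 ≤ w.2) (hPr : ∀ s, 0 ≤ w.1 s) : (fun s => w.2 * w.1 s) ∈ Cset W :=
  ⟨fun s => mul_nonneg hα (hPr s), w, hw, fun _ => le_rfl⟩

lemma zero_mem_Cset_of_mem {W : Set ((S → ℝ) × ℝ)} {p : S → ℝ} (hp : p ∈ Cset W) :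
    (0 : S → ℝ) ∈ Cset W := by
  obtain ⟨hp, w, hw, hle⟩ := hp
  exact ⟨fun _ => le_rfl, w, hw, fun s => (hp s).trans (hle s)⟩

/-- Conditioning `(Pr|G, α)` on `F ⊇ G` gives it back, so it survives updating on `F`. -/
lemma weighted_condProb_mem_Cset_updP [Fintype S] [DecidableEq S] {W : Set ((S → ℝ) × ℝ)}
    (hW : IsWeightedSet W) (hcond : ClosedUnderConditioning W) {w : (S → ℝ) × ℝ} (hw : w ∈ W)
    {G F : Finset S} (hGF : G ⊆ F) (hG : 0 < probOf w.1 G) :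
    (fun s => w.2 * condProb w.1 G s) ∈ Cset (updP W F) := by
  obtain ⟨⟨hPr, -⟩, hα, -⟩ := hW.1 w hw
  have hmem : (condProb w.1 G, w.2) ∈ updP W F :=
    ⟨_, hcond w hw G hG, by simp [probOf_condProb_of_subset hGF hG],
      by simp [condProb_condProb_of_subset hGF hG]⟩
  exact weighted_mem_Cset hmem hα (condProb_nonneg hPr G)

theorem stmt_15_general [Fintype S] [DecidableEq S]
    (W : Set ((S → ℝ) × ℝ)) (hW : IsWeightedSet W)
    (hcond : ∀ w ∈ W, ∀ G : Finset S, 0 < probOf w.1 G → (condProb w.1 G, w.2) ∈ W)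
    (hconv : ∀ F : Finset S, Convex ℝ (Cset (updP W F))) :
    ∀ E F : Finset S, ∀ w₁ ∈ W, ∀ w₂ ∈ W, ∀ w₃ ∈ W,
      0 < probOf w₁.1 (E ∩ F) → 0 < probOf w₂.1 (Eᶜ ∩ F) →
      (fun s => w₃.2 * probOf w₃.1 (E ∩ F) * (w₁.2 * condProb w₁.1 (E ∩ F) s) +
          w₃.2 * probOf w₃.1 (Eᶜ ∩ F) * (w₂.2 * condProb w₂.1 (Eᶜ ∩ F) s)) ∈
        closure (Cset (updP W F)) := by
  intro E F w₁ hw₁ w₂ hw₂ w₃ hw₃ h₁ h₂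
  obtain ⟨hPr₃, hα₀, hα₁⟩ := hW.1 w₃ hw₃
  have hq₁ := weighted_condProb_mem_Cset_updP hW hcond hw₁ Finset.inter_subset_right h₁
  have hq₂ := weighted_condProb_mem_Cset_updP hW hcond hw₂ Finset.inter_subset_right h₂
  have hmass : w₃.2 * probOf w₃.1 (E ∩ F) + w₃.2 * probOf w₃.1 (Eᶜ ∩ F) ≤ 1 := by
    rw [← mul_add, probOf_inter_add_probOf_compl_inter]
    exact mul_le_one₀ hα₁ (probOf_nonneg hPr₃.1 F) (probOf_le_one hPr₃ F)
  exact subset_closure <| (hconv F).add_smul_mem_of_zero_mem (zero_mem_Cset_of_mem hq₁) hq₁ hq₂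
    (mul_nonneg hα₀ (probOf_nonneg hPr₃.1 _)) (mul_nonneg hα₀ (probOf_nonneg hPr₃.1 _)) hmass

/-- if `W` is closed under conditioning and `C(W|ᵖF)` is convex for
every event `F`, then condition (a) of `p`-rectangularity holds. -/
theorem stmt_15 [Fintype S] [Nonempty S] [DecidableEq S]
    (W : Set ((S → ℝ) × ℝ)) (hW : IsWeightedSet W)
    (hcond : ∀ w ∈ W, ∀ G : Finset S, 0 < probOf w.1 G → (condProb w.1 G, w.2) ∈ W)
    (hconv : ∀ F : Finset S, Convex ℝ (Cset (updP W F))) :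
    ∀ E F : Finset S, ∀ w₁ ∈ W, ∀ w₂ ∈ W, ∀ w₃ ∈ W,
      0 < probOf w₁.1 (E ∩ F) → 0 < probOf w₂.1 (Eᶜ ∩ F) →
      (fun s => w₃.2 * probOf w₃.1 (E ∩ F) * (w₁.2 * condProb w₁.1 (E ∩ F) s) +
          w₃.2 * probOf w₃.1 (Eᶜ ∩ F) * (w₂.2 * condProb w₂.1 (Eᶜ ∩ F) s)) ∈
        closure (Cset (updP W F)) :=
  stmt_15_general W hW hcond hconv
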